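/- arXiv:1601.07743 — 2 statements merged into one kernel-verified Lean document; each statement's English description precedes it below -/
import Mathlib

section
/- For every λ > 0, n ∈ ℕ₀ and x ∈ [−1,1], 𝓘^λ_+ C_n^{λ+1/2}(x) = (√π Γ(λ)/Γ(λ+1/2)) · ((n+2λ)/(n+λ+1/2)) · C_n^λ(x), and 𝓘^λ_− C_n^{λ+1/2}(x) = (√π Γ(λ)/Γ(λ+1/2)) · ((n+1)/(n+λ+1/2)) · C_{n+1}^λ(x). -/
open Real MeasureTheory Finset intervalIntegral

noncomputable section

/-- The Gegenbauer (ultraspherical) polynomial `C_n^λ`. -/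
def Gegenbauer (lam : ℝ) (n : ℕ) (x : ℝ) : ℝ :=
  ∑ k ∈ Finset.range (n / 2 + 1),
    ((-1 : ℝ) ^ k * Real.Gamma ((n : ℝ) - (k : ℝ) + lam) /
      (Real.Gamma lam * (Nat.factorial k : ℝ) * (Nat.factorial (n - 2 * k) : ℝ))) *
      (2 * x) ^ (n - 2 * k)

/-- The terminating hypergeometric polynomial `₂F₁(−m, b; c; z)`. -/
def hyp2F1 (m : ℕ) (b c z : ℝ) : ℝ :=
  ∑ k ∈ Finset.range (m + 1),
    ((ascPochhammer ℝ k).eval (-(m : ℝ)) * (ascPochhammer ℝ k).eval b) /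
      ((ascPochhammer ℝ k).eval c * (Nat.factorial k : ℝ)) * z ^ k

/-- The half-step fractional integral `I^λ_+`. -/
def Iplus (lam : ℝ) (f : ℝ → ℝ) (x : ℝ) : ℝ :=
  (1 + x) ^ (-lam + 1 / 2) *
    ∫ τ in (-1 : ℝ)..x, (x - τ) ^ (-(1 / 2) : ℝ) * (1 + τ) ^ lam * f τ

/-- The half-step fractional integral `I^λ_−`. -/
def Iminus (lam : ℝ) (f : ℝ → ℝ) (x : ℝ) : ℝ :=
  (1 - x) ^ (-lam + 1 / 2) *
    ∫ τ in x..(1 : ℝ), (τ - x) ^ (-(1 / 2) : ℝ) * (1 - τ) ^ lam * f τ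

/-- `𝓘^λ_+ = I^λ_+ + I^λ_−`. -/
def calIplus (lam : ℝ) (f : ℝ → ℝ) (x : ℝ) : ℝ := Iplus lam f x + Iminus lam f x

/-- `𝓘^λ_− = I^λ_+ − I^λ_−`. -/
def calIminus (lam : ℝ) (f : ℝ → ℝ) (x : ℝ) : ℝ := Iplus lam f x - Iminus lam f x

/-- The half-step fractional derivative `D^λ_+`. -/
def Dplus (lam : ℝ) (f : ℝ → ℝ) (x : ℝ) : ℝ :=
  (1 + x) *
    deriv (fun y : ℝ => (1 + y) ^ (-lam) *
      ∫ τ in (-1 : ℝ)..y, (y - τ) ^ (-(1 / 2) : ℝ) * (1 + τ) ^ (lam - 1 / 2) * f τ) x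

/-- The half-step fractional derivative `D^λ_−`. -/
def Dminus (lam : ℝ) (f : ℝ → ℝ) (x : ℝ) : ℝ :=
  (1 - x) *
    deriv (fun y : ℝ => (1 - y) ^ (-lam) *
      ∫ τ in y..(1 : ℝ), (τ - y) ^ (-(1 / 2) : ℝ) * (1 - τ) ^ (lam - 1 / 2) * f τ) x

/-- `𝓓^λ_+ = D^λ_+ + D^λ_−`. -/
def calDplus (lam : ℝ) (f : ℝ → ℝ) (x : ℝ) : ℝ := Dplus lam f x + Dminus lam f x

/-- `𝓓^λ_− = D^λ_+ − D^λ_−`. -/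
def calDminus (lam : ℝ) (f : ℝ → ℝ) (x : ℝ) : ℝ := Dplus lam f x - Dminus lam f x

/-- Normalization constant `h_n^λ` for the Gegenbauer system. -/
def hGeg (lam : ℝ) (n : ℕ) : ℝ :=
  Real.pi * Real.Gamma (2 * lam + n) /
    ((2 : ℝ) ^ (2 * lam - 1) * (Nat.factorial n : ℝ) * (lam + n) * (Real.Gamma lam) ^ 2)

/-- The `n`-th Gegenbauer coefficient (parameter `λ`) of `g`. -/
def gegCoeff (lam : ℝ) (g : ℝ → ℝ) (n : ℕ) : ℝ :=
  (1 / hGeg lam n) *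
    ∫ t in (-1 : ℝ)..1, g t * Gegenbauer lam n t * (1 - t ^ 2) ^ (lam - 1 / 2)

/-- The Chebyshev polynomial of the first kind, as a real function. -/
def chebT (n : ℕ) (x : ℝ) : ℝ := (Polynomial.Chebyshev.T ℝ (n : ℤ)).eval x

/-- The `n`-th Chebyshev coefficient of `f`. -/
def chebCoeff (f : ℝ → ℝ) (n : ℕ) : ℝ :=
  if n = 0 then
    (1 / Real.pi) * ∫ t in (-1 : ℝ)..1, f t * (1 - t ^ 2) ^ (-(1 / 2) : ℝ)
  else
    (2 / Real.pi) * ∫ t in (-1 : ℝ)..1, f t * chebT n t * (1 - t ^ 2) ^ (-(1 / 2) : ℝ)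

/-- The Legendre polynomial `P_n = C_n^{1/2}`. -/
def legendreP (n : ℕ) (x : ℝ) : ℝ := Gegenbauer (1 / 2) n x

/-- The `n`-th Legendre coefficient of `g`. -/
def legCoeff (g : ℝ → ℝ) (n : ℕ) : ℝ :=
  ((2 * (n : ℝ) + 1) / 2) * ∫ x in (-1 : ℝ)..1, g x * legendreP n x

/-- `f` is (zonal) positive definite on the sphere `S^m ⊂ ℝ^{m+1}`. -/
def PosDefSphere (m : ℕ) (f : ℝ → ℝ) : Prop :=
  ∀ (n : ℕ) (x : Fin n → EuclideanSpace ℝ (Fin (m + 1))),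
    (∀ i, ‖x i‖ = 1) → Function.Injective x →
      ∀ c : Fin n → ℝ,
        0 ≤ ∑ i : Fin n, ∑ j : Fin n, c i * c j * f (inner ℝ (x i) (x j) : ℝ)

/-- `f` is (zonal) strictly positive definite on the sphere `S^m ⊂ ℝ^{m+1}`. -/
def StrictPosDefSphere (m : ℕ) (f : ℝ → ℝ) : Prop :=
  ∀ (n : ℕ) (x : Fin n → EuclideanSpace ℝ (Fin (m + 1))),
    (∀ i, ‖x i‖ = 1) → Function.Injective x →
      ∀ c : Fin n → ℝ, c ≠ 0 →
        0 < ∑ i : Fin n, ∑ j : Fin n, c i * c j * f (inner ℝ (x i) (x j) : ℝ)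

/-- `f ∈ Λ_m`: continuous on `[−1,1]` and positive definite on `S^m`. -/
def MemLambda (m : ℕ) (f : ℝ → ℝ) : Prop :=
  ContinuousOn f (Set.Icc (-1 : ℝ) 1) ∧ PosDefSphere m f

/-- `f ∈ Λ^+_m`: continuous on `[−1,1]` and strictly positive definite on `S^m`. -/
def MemLambdaPlus (m : ℕ) (f : ℝ → ℝ) : Prop :=
  ContinuousOn f (Set.Icc (-1 : ℝ) 1) ∧ StrictPosDefSphere m f

end

/-! Expanding `C_n^α` in powers of `1 + x` (the hypergeometric form
`C_n^α(x) = (-1)^n (2α)_n / n! · ₂F₁(-n, n + 2α; α + 1/2; (1 + x)/2)`, obtained from the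
three-term recurrence) reduces everything to monomials. A Beta integral shows that `I^λ_+` sends
`(1 + x)^j` to `√π Γ(λ + j + 1) / Γ(λ + j + 3/2) · (1 + x)^(j + 1)`, and comparing coefficients
gives `I^λ_+ C_n^{λ+1/2} = c / (2(n + λ + 1/2)) · ((n + 2λ) C_n^λ + (n + 1) C_{n+1}^λ)`.
The reflection `x ↦ -x` exchanges `I^λ_+` and `I^λ_-` and, by parity of `C_n`, flips the sign
of the second term; adding and subtracting the two formulas gives the theorem. -/

open scoped Nat

theorem Real.inv_Gamma_eq_self_mul_inv_Gamma_add_one (s : ℝ) :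
    (Gamma s)⁻¹ = s * (Gamma (s + 1))⁻¹ := by
  rcases ne_or_eq s 0 with h | rfl
  · rw [Gamma_add_one h, mul_inv, mul_inv_cancel_left₀ h]
  · rw [zero_add, Gamma_zero, inv_zero, zero_mul]

-- `(Γ (m + 1))⁻¹` stands for `1 / m!`: it is `0` at `m = -1, -2, …` (poles of `Γ`, and `0⁻¹ = 0`),
-- so out-of-range coefficients vanish by themselves and the recurrences need no case split.
noncomputable def gegenbauerMonomialCoeff (α : ℝ) (n k : ℕ) : ℝ :=
  (-1) ^ k * Gamma ((n : ℝ) - k + α) / (Gamma α * k !) * (Gamma ((n : ℝ) - 2 * k + 1))⁻¹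

theorem gegenbauerMonomialCoeff_eq_zero {α : ℝ} {n k : ℕ} (h : n < 2 * k) :
    gegenbauerMonomialCoeff α n k = 0 := by
  obtain ⟨m, hm⟩ := Nat.exists_eq_add_of_lt h
  have : (n : ℝ) - 2 * k + 1 = -(m : ℝ) := by
    have : (2 * k : ℝ) = n + m + 1 := by exact_mod_cast hm
    linarith
  rw [gegenbauerMonomialCoeff, this, Gamma_neg_nat_eq_zero, inv_zero, mul_zero]

theorem Gegenbauer_eq_sum_range (α : ℝ) {n N : ℕ} (hN : n / 2 < N) (x : ℝ) :
    Gegenbauer α n x = ∑ k ∈ range N, gegenbauerMonomialCoeff α n k * (2 * x) ^ (n - 2 * k) := by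
  rw [Gegenbauer]
  refine sum_subset_zero_on_sdiff (range_subset_range.mpr hN) (fun k hk => ?_) (fun k hk => ?_)
  · rw [mem_sdiff, mem_range, mem_range] at hk
    rw [gegenbauerMonomialCoeff_eq_zero (by omega), zero_mul]
  · have hkn : 2 * k ≤ n := by rw [mem_range] at hk; omega
    rw [gegenbauerMonomialCoeff, show (n : ℝ) - 2 * k + 1 = ((n - 2 * k : ℕ) : ℝ) + 1 by
      push_cast [hkn]; ring, Gamma_nat_eq_factorial]
    ring

theorem gegenbauerMonomialCoeff_mul_pow_succ (α : ℝ) (n k : ℕ) (y : ℝ) :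
    gegenbauerMonomialCoeff α n k * y ^ (n - 2 * k) * y =
      gegenbauerMonomialCoeff α n k * y ^ (n + 1 - 2 * k) := by
  by_cases h : 2 * k ≤ n
  · rw [mul_assoc, ← pow_succ, show n - 2 * k + 1 = n + 1 - 2 * k by omega]
  · rw [gegenbauerMonomialCoeff_eq_zero (by omega), zero_mul, zero_mul, zero_mul]

theorem gegenbauerMonomialCoeff_add_two_zero {α : ℝ} (hα : 0 < α) (n : ℕ) :
    (n + 2) * gegenbauerMonomialCoeff α (n + 2) 0 =
      (n + 1 + α) * gegenbauerMonomialCoeff α (n + 1) 0 := by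
  simp only [gegenbauerMonomialCoeff, pow_zero, one_mul, Nat.factorial_zero, Nat.cast_one, mul_one,
    Nat.cast_zero, sub_zero, mul_zero]
  push_cast
  rw [show (n : ℝ) + 2 + α = n + 1 + α + 1 by ring, Gamma_add_one (by positivity),
    inv_Gamma_eq_self_mul_inv_Gamma_add_one (n + 1 + 1),
    show (n : ℝ) + 1 + 1 + 1 = n + 2 + 1 by ring]
  ring

theorem gegenbauerMonomialCoeff_add_two_succ {α : ℝ} (hα : 0 < α) {n k : ℕ} (hk : k ≤ n) :
    (n + 2) * gegenbauerMonomialCoeff α (n + 2) (k + 1) =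
      (n + 1 + α) * gegenbauerMonomialCoeff α (n + 1) (k + 1)
        - (n + 2 * α) * gegenbauerMonomialCoeff α n k := by
  have hk' : (k : ℝ) ≤ n := by exact_mod_cast hk
  simp only [gegenbauerMonomialCoeff, Nat.factorial_succ, pow_succ]
  push_cast
  rw [show (n : ℝ) + 2 - (k + 1) + α = n - k + α + 1 by ring,
    show (n : ℝ) + 1 - (k + 1) + α = n - k + α by ring,
    show (n : ℝ) + 2 - 2 * (k + 1) + 1 = n - 2 * k + 1 by ring,
    show (n : ℝ) + 1 - 2 * (k + 1) + 1 = n - 2 * k by ring,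
    Gamma_add_one (s := n - k + α) (by linarith),
    inv_Gamma_eq_self_mul_inv_Gamma_add_one (n - 2 * k)]
  have := Gamma_pos_of_pos hα
  field_simp
  ring

theorem Gegenbauer_add_two {α : ℝ} (hα : 0 < α) (n : ℕ) (x : ℝ) :
    (n + 2) * Gegenbauer α (n + 2) x =
      2 * (n + 1 + α) * x * Gegenbauer α (n + 1) x - (n + 2 * α) * Gegenbauer α n x := by
  rw [Gegenbauer_eq_sum_range α (N := n / 2 + 1 + 1) (by omega),
    Gegenbauer_eq_sum_range α (N := n / 2 + 1 + 1) (by omega),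
    Gegenbauer_eq_sum_range α (N := n / 2 + 1) (by omega), mul_sum, mul_sum, mul_sum,
    sum_range_succ' _ (n / 2 + 1), sum_range_succ' _ (n / 2 + 1), add_sub_right_comm,
    ← sum_sub_distrib]
  congr 1
  · refine sum_congr rfl fun k hk => ?_
    have hrec := gegenbauerMonomialCoeff_add_two_succ hα (n := n) (k := k)
      (by rw [mem_range] at hk; omega)
    have hpow := gegenbauerMonomialCoeff_mul_pow_succ α (n + 1) (k + 1) (2 * x)
    rw [show n + 1 + 1 - 2 * (k + 1) = n - 2 * k by omega] at hpow
    rw [show n + 2 - 2 * (k + 1) = n - 2 * k by omega]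
    linear_combination (2 * x) ^ (n - 2 * k) * hrec - (n + 1 + α) * hpow
  · have hpow := gegenbauerMonomialCoeff_mul_pow_succ α (n + 1) 0 (2 * x)
    linear_combination (2 * x) ^ (n + 2 - 2 * 0) * gegenbauerMonomialCoeff_add_two_zero hα n
      - (n + 1 + α) * hpow

theorem Gegenbauer_zero {α : ℝ} (hα : 0 < α) (x : ℝ) : Gegenbauer α 0 x = 1 := by
  simp [Gegenbauer, (Gamma_pos_of_pos hα).ne']

theorem Gegenbauer_one {α : ℝ} (hα : 0 < α) (x : ℝ) : Gegenbauer α 1 x = 2 * α * x := by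
  simp only [Gegenbauer, Nat.reduceDiv, zero_add, range_one, Nat.cast_one, sum_singleton, pow_zero,
    CharP.cast_eq_zero, sub_zero, one_mul, Nat.factorial_zero, mul_one, mul_zero, tsub_zero,
    Nat.factorial_one, pow_one]
  rw [add_comm 1 α, Gamma_add_one hα.ne']
  field_simp [(Gamma_pos_of_pos hα).ne']

theorem Gegenbauer_neg (α : ℝ) (n : ℕ) (x : ℝ) :
    Gegenbauer α n (-x) = (-1) ^ n * Gegenbauer α n x := by
  rw [Gegenbauer, Gegenbauer, mul_sum]
  refine sum_congr rfl fun k hk => ?_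
  have hkn : 2 * k ≤ n := by rw [mem_range] at hk; omega
  have hsign : (-1 : ℝ) ^ n = (-1) ^ (n - 2 * k) := by
    conv_lhs => rw [← Nat.sub_add_cancel hkn, pow_add, pow_mul, neg_one_sq, one_pow, mul_one]
  rw [show 2 * -x = -(2 * x) by ring, neg_pow (2 * x), ← hsign]
  ring

-- `(-1)^(n+j) (2α)_(n+j) / ((α + 1/2)_j j! 2^j (n - j)!)`: the `j`-th term of the hypergeometric
-- form of `C_n^α`.
noncomputable def gegenbauerTaylorCoeff (α : ℝ) (n j : ℕ) : ℝ :=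
  (-1) ^ (n + j) * Gamma (n + j + 2 * α) * Gamma (α + 1 / 2) /
    (Gamma (2 * α) * Gamma (α + j + 1 / 2) * j ! * 2 ^ j) * (Gamma ((n : ℝ) - j + 1))⁻¹

theorem gegenbauerTaylorCoeff_eq_zero {α : ℝ} {n j : ℕ} (h : n < j) :
    gegenbauerTaylorCoeff α n j = 0 := by
  obtain ⟨m, hm⟩ := Nat.exists_eq_add_of_lt h
  have : (n : ℝ) - j + 1 = -(m : ℝ) := by
    have : (j : ℝ) = n + m + 1 := by exact_mod_cast hm
    linarith
  rw [gegenbauerTaylorCoeff, this, Gamma_neg_nat_eq_zero, inv_zero, mul_zero]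

theorem gegenbauerTaylorCoeff_add_two_zero {α : ℝ} (hα : 0 < α) (n : ℕ) :
    (n + 2) * gegenbauerTaylorCoeff α (n + 2) 0 =
      -2 * (n + 1 + α) * gegenbauerTaylorCoeff α (n + 1) 0
        - (n + 2 * α) * gegenbauerTaylorCoeff α n 0 := by
  simp only [gegenbauerTaylorCoeff, Nat.cast_zero, add_zero, sub_zero, pow_zero,
    Nat.factorial_zero, Nat.cast_one, mul_one]
  push_cast
  rw [show (n : ℝ) + 2 + 2 * α = n + 1 + 2 * α + 1 by ring,
    show (n : ℝ) + 1 + 2 * α = n + 2 * α + 1 by ring,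
    Gamma_add_one (s := n + 2 * α + 1) (by positivity),
    Gamma_add_one (s := n + 2 * α) (by positivity),
    inv_Gamma_eq_self_mul_inv_Gamma_add_one (n + 1),
    inv_Gamma_eq_self_mul_inv_Gamma_add_one (n + 1 + 1),
    show (n : ℝ) + 1 + 1 + 1 = n + 2 + 1 by ring]
  have := Gamma_pos_of_pos (by positivity : 0 < 2 * α)
  have := Gamma_pos_of_pos (by positivity : 0 < α + 1 / 2)
  field_simp
  ring

theorem gegenbauerTaylorCoeff_add_two_succ {α : ℝ} (hα : 0 < α) (n j : ℕ) :
    (n + 2) * gegenbauerTaylorCoeff α (n + 2) (j + 1) =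
      2 * (n + 1 + α) * (gegenbauerTaylorCoeff α (n + 1) j
        - gegenbauerTaylorCoeff α (n + 1) (j + 1))
        - (n + 2 * α) * gegenbauerTaylorCoeff α n (j + 1) := by
  simp only [gegenbauerTaylorCoeff, Nat.factorial_succ, pow_succ]
  push_cast
  rw [show (n : ℝ) + 2 + (j + 1) + 2 * α = n + j + 1 + 2 * α + 1 + 1 by ring,
    show (n : ℝ) + 1 + (j + 1) + 2 * α = n + j + 1 + 2 * α + 1 by ring,
    show (n : ℝ) + 1 + j + 2 * α = n + j + 1 + 2 * α by ring,
    show (n : ℝ) + (j + 1) + 2 * α = n + j + 1 + 2 * α by ring,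
    show α + (j + 1) + 1 / 2 = α + j + 1 / 2 + 1 by ring,
    show (n : ℝ) + 2 - (j + 1) + 1 = n - j + 2 by ring,
    show (n : ℝ) + 1 - j + 1 = n - j + 2 by ring,
    show (n : ℝ) + 1 - (j + 1) + 1 = n - j + 1 by ring,
    show (n : ℝ) - (j + 1) + 1 = n - j by ring,
    Gamma_add_one (s := n + j + 1 + 2 * α + 1) (by positivity),
    Gamma_add_one (s := n + j + 1 + 2 * α) (by positivity),
    Gamma_add_one (s := α + j + 1 / 2) (by positivity),
    inv_Gamma_eq_self_mul_inv_Gamma_add_one (n - j),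
    inv_Gamma_eq_self_mul_inv_Gamma_add_one (n - j + 1),
    show (n : ℝ) - j + 1 + 1 = n - j + 2 by ring]
  have := Gamma_pos_of_pos (by positivity : 0 < 2 * α)
  have := Gamma_pos_of_pos (by positivity : 0 < α + j + 1 / 2)
  field_simp
  ring

theorem sum_gegenbauerTaylorCoeff_add_two {α : ℝ} (hα : 0 < α) (n : ℕ) (y : ℝ) :
    (n + 2) * ∑ j ∈ range (n + 2 + 1), gegenbauerTaylorCoeff α (n + 2) j * y ^ j =
      2 * (n + 1 + α) * (y - 1) *
          ∑ j ∈ range (n + 1 + 1), gegenbauerTaylorCoeff α (n + 1) j * y ^ j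
        - (n + 2 * α) * ∑ j ∈ range (n + 1), gegenbauerTaylorCoeff α n j * y ^ j := by
  set a := gegenbauerTaylorCoeff α
  have hsplit₂ : ∑ j ∈ range (n + 2 + 1), a (n + 2) j * y ^ j =
      ∑ j ∈ range (n + 2), a (n + 2) (j + 1) * y ^ (j + 1) + a (n + 2) 0 := by
    rw [sum_range_succ', pow_zero, mul_one]
  have hmul : y * ∑ j ∈ range (n + 1 + 1), a (n + 1) j * y ^ j =
      ∑ j ∈ range (n + 2), a (n + 1) j * y ^ (j + 1) := by
    rw [mul_sum]
    exact sum_congr rfl fun j _ => by ring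
  have hsplit₁ : ∑ j ∈ range (n + 1 + 1), a (n + 1) j * y ^ j =
      ∑ j ∈ range (n + 2), a (n + 1) (j + 1) * y ^ (j + 1) + a (n + 1) 0 := by
    rw [sum_range_succ', sum_range_succ _ (n + 1),
      show a (n + 1) (n + 1 + 1) = 0 from gegenbauerTaylorCoeff_eq_zero (by omega),
      zero_mul, add_zero, pow_zero, mul_one]
  have hsplit₀ : ∑ j ∈ range (n + 1), a n j * y ^ j =
      ∑ j ∈ range (n + 2), a n (j + 1) * y ^ (j + 1) + a n 0 := by
    rw [sum_range_succ', sum_range_succ _ (n + 1), sum_range_succ _ n,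
      show a n (n + 1) = 0 from gegenbauerTaylorCoeff_eq_zero (by omega),
      show a n (n + 1 + 1) = 0 from gegenbauerTaylorCoeff_eq_zero (by omega),
      zero_mul, zero_mul, add_zero, add_zero, pow_zero, mul_one]
  have hsum : (n + 2) * ∑ j ∈ range (n + 2), a (n + 2) (j + 1) * y ^ (j + 1) =
      2 * (n + 1 + α) * (∑ j ∈ range (n + 2), a (n + 1) j * y ^ (j + 1)
          - ∑ j ∈ range (n + 2), a (n + 1) (j + 1) * y ^ (j + 1))
        - (n + 2 * α) * ∑ j ∈ range (n + 2), a n (j + 1) * y ^ (j + 1) := by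
    simp only [mul_sum, ← sum_sub_distrib]
    exact sum_congr rfl fun j _ => by
      linear_combination y ^ (j + 1) * gegenbauerTaylorCoeff_add_two_succ hα n j
  linear_combination (n + 2 : ℝ) * hsplit₂ - 2 * (n + 1 + α) * hmul + 2 * (n + 1 + α) * hsplit₁
    + (n + 2 * α) * hsplit₀ + hsum + gegenbauerTaylorCoeff_add_two_zero hα n

theorem Gegenbauer_eq_sum_gegenbauerTaylorCoeff {α : ℝ} (hα : 0 < α) (n : ℕ) (x : ℝ) :
    Gegenbauer α n x = ∑ j ∈ range (n + 1), gegenbauerTaylorCoeff α n j * (1 + x) ^ j := by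
  have := Gamma_pos_of_pos (by positivity : 0 < 2 * α)
  have := Gamma_pos_of_pos (by positivity : 0 < α + 1 / 2)
  induction n using Nat.twoStepInduction with
  | zero =>
    simp only [Gegenbauer_zero hα, gegenbauerTaylorCoeff]
    norm_num
    field_simp
  | one =>
    simp only [Gegenbauer_one hα, gegenbauerTaylorCoeff, sum_range_succ, sum_range_zero]
    norm_num
    rw [show 2 + 2 * α = 2 * α + 1 + 1 by ring, show 1 + 2 * α = 2 * α + 1 by ring,
      show α + 1 + 1 / 2 = α + 1 / 2 + 1 by ring, Gamma_add_one (s := 2 * α + 1) (by positivity),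
      Gamma_add_one (s := 2 * α) (by positivity), Gamma_add_one (s := α + 1 / 2) (by positivity)]
    field_simp
    ring
  | more n ih₀ ih₁ =>
    refine mul_left_cancel₀ (by positivity : (n + 2 : ℝ) ≠ 0) ?_
    rw [Gegenbauer_add_two hα, ih₀, ih₁, sum_gegenbauerTaylorCoeff_add_two hα,
      add_sub_cancel_left]

theorem integral_rpow_mul_one_sub_rpow {u v : ℝ} (hu : 0 < u) (hv : 0 < v) :
    ∫ s in (0 : ℝ)..1, s ^ (u - 1) * (1 - s) ^ (v - 1) = Gamma u * Gamma v / Gamma (u + v) := by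
  have hβ := Complex.Gamma_mul_Gamma_eq_betaIntegral (s := (u : ℂ)) (t := (v : ℂ))
    (by simpa using hu) (by simpa using hv)
  have hreal : Complex.betaIntegral u v =
      ((∫ s in (0 : ℝ)..1, s ^ (u - 1) * (1 - s) ^ (v - 1) : ℝ) : ℂ) := by
    rw [Complex.betaIntegral, ← intervalIntegral.integral_ofReal]
    refine integral_congr fun s hs => ?_
    rw [Set.uIcc_of_le zero_le_one] at hs
    push_cast
    rw [Complex.ofReal_cpow hs.1, Complex.ofReal_cpow (by linarith [hs.2])]
    push_cast
    ring
  rw [hreal, Complex.Gamma_ofReal, Complex.Gamma_ofReal, ← Complex.ofReal_add,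
    Complex.Gamma_ofReal, ← Complex.ofReal_mul, ← Complex.ofReal_mul] at hβ
  rw [eq_div_iff (Gamma_pos_of_pos (by linarith)).ne', mul_comm]
  exact_mod_cast hβ.symm

theorem integral_sub_rpow_mul_sub_rpow {a x μ ν : ℝ} (hax : a < x) (hμ : 0 < μ)
    (hν : 0 < ν) :
    ∫ τ in a..x, (x - τ) ^ (μ - 1) * (τ - a) ^ (ν - 1) =
      (x - a) ^ (μ + ν - 1) * (Gamma μ * Gamma ν / Gamma (μ + ν)) := by
  have hc : 0 < x - a := sub_pos.mpr hax
  have hsub := smul_integral_comp_mul_add (a := 0) (b := 1)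
    (fun τ => (x - τ) ^ (μ - 1) * (τ - a) ^ (ν - 1)) (x - a) a
  rw [mul_zero, zero_add, mul_one, sub_add_cancel, smul_eq_mul] at hsub
  rw [← hsub, integral_congr (g := fun s => (x - a) ^ (μ - 1) * (x - a) ^ (ν - 1) *
      (s ^ (ν - 1) * (1 - s) ^ (μ - 1))), intervalIntegral.integral_const_mul,
    integral_rpow_mul_one_sub_rpow hν hμ, add_comm ν μ, ← mul_assoc, ← mul_assoc,
    ← rpow_one_add' hc.le (by linarith), ← rpow_add hc]
  · ring_nf
  · intro s hs
    rw [Set.uIcc_of_le zero_le_one] at hs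
    simp only
    rw [show x - ((x - a) * s + a) = (x - a) * (1 - s) by ring, add_sub_cancel_right,
      mul_rpow hc.le (by linarith [hs.2]), mul_rpow hc.le hs.1]
    ring

theorem intervalIntegrable_Iplus_integrand {lam : ℝ} (hlam : 0 ≤ lam) {f : ℝ → ℝ} {x : ℝ}
    (hf : ContinuousOn f (Set.uIcc (-1) x)) :
    IntervalIntegrable (fun τ => (x - τ) ^ (-(1 / 2) : ℝ) * (1 + τ) ^ lam * f τ)
      volume (-1) x := by
  have hkernel : IntervalIntegrable (fun τ => (x - τ) ^ (-(1 / 2) : ℝ)) volume (-1) x := by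
    simpa using (intervalIntegral.intervalIntegrable_rpow' (a := x + 1) (b := 0)
      (by norm_num : (-1 : ℝ) < -(1 / 2))).comp_sub_left x
  have hcont : ContinuousOn (fun τ => (1 + τ) ^ lam * f τ) (Set.uIcc (-1) x) :=
    ((continuousOn_const.add continuousOn_id).rpow_const fun _ _ => Or.inr hlam).mul hf
  simpa only [mul_assoc] using hkernel.mul_continuousOn hcont

theorem Iplus_sum {lam x : ℝ} {ι : Type*} (s : Finset ι) (f : ι → ℝ → ℝ)
    (hf : ∀ i ∈ s, IntervalIntegrable
      (fun τ => (x - τ) ^ (-(1 / 2) : ℝ) * (1 + τ) ^ lam * f i τ) volume (-1) x) :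
    Iplus lam (fun t => ∑ i ∈ s, f i t) x = ∑ i ∈ s, Iplus lam (f i) x := by
  simp only [Iplus, mul_sum]
  rw [integral_finsetSum hf, mul_sum]

theorem Iplus_const_mul (lam c : ℝ) (f : ℝ → ℝ) (x : ℝ) :
    Iplus lam (fun t => c * f t) x = c * Iplus lam f x := by
  simp only [Iplus, mul_left_comm _ c, intervalIntegral.integral_const_mul]

theorem Iplus_one_add_pow {lam : ℝ} (hlam : 0 ≤ lam) (j : ℕ) {x : ℝ} (hx : -1 ≤ x) :
    Iplus lam (fun t => (1 + t) ^ j) x =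
      √π * Gamma (lam + j + 1) / Gamma (lam + j + 3 / 2) * (1 + x) ^ (j + 1) := by
  rcases hx.eq_or_lt with rfl | hx
  · simp [Iplus]
  have h1x : 0 < 1 + x := by linarith
  have hint : ∫ τ in (-1 : ℝ)..x, (x - τ) ^ (-(1 / 2) : ℝ) * (1 + τ) ^ lam * (1 + τ) ^ j =
      ∫ τ in (-1 : ℝ)..x, (x - τ) ^ ((1 / 2 : ℝ) - 1) * (τ - -1) ^ (lam + j + 1 - 1) := by
    refine integral_congr fun τ hτ => ?_
    rw [Set.uIcc_of_le hx.le] at hτ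
    rw [show (1 / 2 : ℝ) - 1 = -(1 / 2) by norm_num, sub_neg_eq_add, add_comm τ 1,
      add_sub_cancel_right,
      rpow_add_of_nonneg (by linarith [hτ.1]) hlam (Nat.cast_nonneg j), rpow_natCast, mul_assoc]
  rw [Iplus, hint, integral_sub_rpow_mul_sub_rpow hx (by norm_num) (by positivity), sub_neg_eq_add,
    add_comm x 1, ← mul_assoc, ← rpow_add h1x, Gamma_one_half_eq,
    show -lam + 1 / 2 + (1 / 2 + (lam + j + 1) - 1) = ((j + 1 : ℕ) : ℝ) by push_cast; ring,
    rpow_natCast, show 1 / 2 + (lam + j + 1) = lam + j + 3 / 2 by ring]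
  ring

theorem Iplus_sum_mul_one_add_pow {lam : ℝ} (hlam : 0 ≤ lam) (c : ℕ → ℝ) (N : ℕ) {x : ℝ}
    (hx : -1 ≤ x) :
    Iplus lam (fun t => ∑ j ∈ range N, c j * (1 + t) ^ j) x =
      ∑ j ∈ range N,
        c j * (√π * Gamma (lam + j + 1) / Gamma (lam + j + 3 / 2)) * (1 + x) ^ (j + 1) := by
  refine (Iplus_sum (range N) (fun j t => c j * (1 + t) ^ j)
    fun j _ => intervalIntegrable_Iplus_integrand hlam (by fun_prop)).trans ?_
  refine sum_congr rfl fun j _ => ?_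
  rw [Iplus_const_mul, Iplus_one_add_pow hlam j hx, mul_assoc]

theorem Iminus_eq_Iplus_comp_neg (lam : ℝ) (f : ℝ → ℝ) (x : ℝ) :
    Iminus lam f x = Iplus lam (fun t => f (-t)) (-x) := by
  rw [Iminus, Iplus, ← sub_eq_add_neg,
    ← integral_comp_neg fun τ => (-x - τ) ^ (-(1 / 2) : ℝ) * (1 + τ) ^ lam * f (-τ)]
  simp only [neg_neg, sub_neg_eq_add, ← sub_eq_add_neg, neg_add_eq_sub]

theorem gegenbauerTaylorCoeff_combination_zero {lam : ℝ} (hlam : 0 < lam) (n : ℕ) :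
    (n + 2 * lam) * gegenbauerTaylorCoeff lam n 0 + (n + 1) * gegenbauerTaylorCoeff lam (n + 1) 0
      = 0 := by
  simp only [gegenbauerTaylorCoeff, Nat.cast_zero, add_zero, sub_zero, pow_zero,
    Nat.factorial_zero, Nat.cast_one, mul_one]
  push_cast
  rw [show (n : ℝ) + 1 + 2 * lam = n + 2 * lam + 1 by ring,
    Gamma_add_one (s := n + 2 * lam) (by positivity),
    inv_Gamma_eq_self_mul_inv_Gamma_add_one (n + 1)]
  ring

theorem gegenbauerTaylorCoeff_add_half_mul {lam : ℝ} (hlam : 0 < lam) (n j : ℕ) :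
    gegenbauerTaylorCoeff (lam + 1 / 2) n j *
        (√π * Gamma (lam + j + 1) / Gamma (lam + j + 3 / 2)) =
      √π * Gamma lam / Gamma (lam + 1 / 2) / (2 * (n + lam + 1 / 2)) *
        ((n + 2 * lam) * gegenbauerTaylorCoeff lam n (j + 1)
          + (n + 1) * gegenbauerTaylorCoeff lam (n + 1) (j + 1)) := by
  simp only [gegenbauerTaylorCoeff, Nat.factorial_succ, pow_succ]
  push_cast
  rw [show (n : ℝ) + j + 2 * (lam + 1 / 2) = n + j + 1 + 2 * lam by ring,
    show (n : ℝ) + (j + 1) + 2 * lam = n + j + 1 + 2 * lam by ring,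
    show (n : ℝ) + 1 + (j + 1) + 2 * lam = n + j + 1 + 2 * lam + 1 by ring,
    show lam + 1 / 2 + 1 / 2 = lam + 1 by ring, show 2 * (lam + 1 / 2) = 2 * lam + 1 by ring,
    show lam + 1 / 2 + j + 1 / 2 = lam + j + 1 by ring,
    show lam + (j + 1) + 1 / 2 = lam + j + 3 / 2 by ring,
    show (n : ℝ) - (j + 1) + 1 = n - j by ring,
    show (n : ℝ) + 1 - (j + 1) + 1 = n - j + 1 by ring,
    Gamma_add_one (s := n + j + 1 + 2 * lam) (by positivity), Gamma_add_one hlam.ne',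
    Gamma_add_one (s := 2 * lam) (by positivity), inv_Gamma_eq_self_mul_inv_Gamma_add_one (n - j)]
  have := Gamma_pos_of_pos hlam
  have := Gamma_pos_of_pos (by positivity : 0 < 2 * lam)
  have := Gamma_pos_of_pos (by positivity : 0 < lam + 1 / 2)
  have := Gamma_pos_of_pos (by positivity : 0 < lam + j + 1)
  have := Gamma_pos_of_pos (by positivity : 0 < lam + j + 3 / 2)
  field_simp
  ring

theorem Iplus_Gegenbauer {lam : ℝ} (hlam : 0 < lam) (n : ℕ) {x : ℝ} (hx : -1 ≤ x) :
    Iplus lam (Gegenbauer (lam + 1 / 2) n) x =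
      √π * Gamma lam / Gamma (lam + 1 / 2) / (2 * (n + lam + 1 / 2)) *
        ((n + 2 * lam) * Gegenbauer lam n x + (n + 1) * Gegenbauer lam (n + 1) x) := by
  set K := √π * Gamma lam / Gamma (lam + 1 / 2) / (2 * (n + lam + 1 / 2))
  set a := gegenbauerTaylorCoeff lam
  have hfun : Gegenbauer (lam + 1 / 2) n =
      fun t => ∑ j ∈ range (n + 1), gegenbauerTaylorCoeff (lam + 1 / 2) n j * (1 + t) ^ j :=
    funext (Gegenbauer_eq_sum_gegenbauerTaylorCoeff (by positivity) n)
  have hsplit₀ : ∑ j ∈ range (n + 1), a n j * (1 + x) ^ j =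
      ∑ j ∈ range (n + 1), a n (j + 1) * (1 + x) ^ (j + 1) + a n 0 := by
    rw [sum_range_succ', sum_range_succ _ n,
      show a n (n + 1) = 0 from gegenbauerTaylorCoeff_eq_zero (by omega),
      zero_mul, add_zero, pow_zero, mul_one]
  have hsplit₁ : ∑ j ∈ range (n + 1 + 1), a (n + 1) j * (1 + x) ^ j =
      ∑ j ∈ range (n + 1), a (n + 1) (j + 1) * (1 + x) ^ (j + 1) + a (n + 1) 0 := by
    rw [sum_range_succ', pow_zero, mul_one]
  have hsum : ∑ j ∈ range (n + 1), gegenbauerTaylorCoeff (lam + 1 / 2) n j *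
        (√π * Gamma (lam + j + 1) / Gamma (lam + j + 3 / 2)) * (1 + x) ^ (j + 1) =
      K * ((n + 2 * lam) * ∑ j ∈ range (n + 1), a n (j + 1) * (1 + x) ^ (j + 1)
        + (n + 1) * ∑ j ∈ range (n + 1), a (n + 1) (j + 1) * (1 + x) ^ (j + 1)) := by
    simp only [mul_sum, ← sum_add_distrib]
    exact sum_congr rfl fun j _ => by
      linear_combination (1 + x) ^ (j + 1) * gegenbauerTaylorCoeff_add_half_mul hlam n j
  rw [hfun, Iplus_sum_mul_one_add_pow hlam.le _ _ hx, Gegenbauer_eq_sum_gegenbauerTaylorCoeff hlam,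
    Gegenbauer_eq_sum_gegenbauerTaylorCoeff hlam]
  linear_combination hsum - K * (n + 2 * lam) * hsplit₀ - K * (n + 1) * hsplit₁
    - K * gegenbauerTaylorCoeff_combination_zero hlam n

theorem Iminus_Gegenbauer {lam : ℝ} (hlam : 0 < lam) (n : ℕ) {x : ℝ} (hx : x ≤ 1) :
    Iminus lam (Gegenbauer (lam + 1 / 2) n) x =
      √π * Gamma lam / Gamma (lam + 1 / 2) / (2 * (n + lam + 1 / 2)) *
        ((n + 2 * lam) * Gegenbauer lam n x - (n + 1) * Gegenbauer lam (n + 1) x) := by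
  set K := √π * Gamma lam / Gamma (lam + 1 / 2) / (2 * (n + lam + 1 / 2))
  have hsq : (-1 : ℝ) ^ n * (-1) ^ n = 1 := by rw [← mul_pow]; norm_num
  simp only [Iminus_eq_Iplus_comp_neg, Gegenbauer_neg]
  rw [Iplus_const_mul, Iplus_Gegenbauer hlam n (by linarith), Gegenbauer_neg, Gegenbauer_neg,
    pow_succ]
  linear_combination K * ((n + 2 * lam) * Gegenbauer lam n x - (n + 1) * Gegenbauer lam (n + 1) x)
    * hsq

/-- `𝓘^λ_+ C_n^{λ+1/2} = const · C_n^λ` and `𝓘^λ_− C_n^{λ+1/2} = const · C_{n+1}^λ`. -/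
theorem stmt17 (lam : ℝ) (hlam : 0 < lam) (n : ℕ) (x : ℝ) (hx : x ∈ Set.Icc (-1 : ℝ) 1) :
    calIplus lam (Gegenbauer (lam + 1 / 2) n) x =
      (Real.sqrt Real.pi * Real.Gamma lam / Real.Gamma (lam + 1 / 2)) *
        (((n : ℝ) + 2 * lam) / ((n : ℝ) + lam + 1 / 2)) * Gegenbauer lam n x ∧
    calIminus lam (Gegenbauer (lam + 1 / 2) n) x =
      (Real.sqrt Real.pi * Real.Gamma lam / Real.Gamma (lam + 1 / 2)) *
        (((n : ℝ) + 1) / ((n : ℝ) + lam + 1 / 2)) * Gegenbauer lam (n + 1) x := by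
  have hs : (n : ℝ) + lam + 1 / 2 ≠ 0 := by positivity
  rw [calIplus, calIminus, Iplus_Gegenbauer hlam n hx.1, Iminus_Gegenbauer hlam n hx.2]
  constructor <;> field_simp <;> ring
end

section
/- For every λ > 0, n ∈ ℕ₀ and x ∈ [−1,1], 𝓓^λ_+ C_n^λ(x) = (√π Γ(λ+1/2)/Γ(λ)) · (2(n+2λ)/(n+λ)) · C_{n−1}^{λ+1/2}(x) (with the convention C_{−1}^{λ+1/2} = 0), and 𝓓^λ_− C_n^λ(x) = (√π Γ(λ+1/2)/Γ(λ)) · (2n/(n+λ)) · C_n^{λ+1/2}(x). -/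
open Real MeasureTheory Finset intervalIntegral

/-!
`D^λ_+` is diagonal on the powers of `1 + x`: by the Beta integral the inner integral of
`(1 + τ)^j` is `B(λ + j + 1/2, 1/2) (1 + x)^(λ + j)`, hence
`D^λ_+ (1 + x)^j = j B(λ + j + 1/2, 1/2) (1 + x)^j`. The coefficients of `C_n^λ` in powers of
`1 + x` are values at `1` of Gegenbauer polynomials, and `C_m^μ(1) = Γ(2μ + m) / (Γ(2μ) m!)`
follows from the three-term recurrence. Comparing coefficients gives
`D^λ_+ C_{n+1}^λ = c / (n + 1 + λ) ((n + 1 + 2λ) C_n^{λ+1/2} + (n + 1) C_{n+1}^{λ+1/2})` with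
`c = √π Γ(λ + 1/2) / Γ(λ)`. The reflection `x ↦ -x` turns `D^λ_-` into `D^λ_+`, and the parity
of the Gegenbauer polynomials flips the sign of the second term; sum and difference give the two
formulas.
-/

open Filter Topology ProbabilityTheory
open scoped Nat

theorem integral_rpow_mul_one_sub_rpow_s18 {a b : ℝ} (ha : 0 < a) (hb : 0 < b) :
    ∫ s in (0 : ℝ)..1, s ^ (a - 1) * (1 - s) ^ (b - 1) = beta a b := by
  suffices Complex.betaIntegral a b = ↑(∫ s in (0 : ℝ)..1, s ^ (a - 1) * (1 - s) ^ (b - 1)) by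
    rw [beta_eq_betaIntegralReal a b ha hb, this, Complex.ofReal_re]
  rw [Complex.betaIntegral, ← integral_ofReal]
  refine integral_congr fun s hs => ?_
  rw [Set.uIcc_of_le zero_le_one] at hs
  simp only [Complex.ofReal_mul, Complex.ofReal_cpow hs.1, Complex.ofReal_cpow (sub_nonneg.2 hs.2)]
  push_cast
  rfl

theorem integral_sub_rpow_mul_one_add_rpow {a b x : ℝ} (ha : 0 < a) (hb : 0 < b) (hx : -1 < x) :
    ∫ τ in (-1 : ℝ)..x, (x - τ) ^ (b - 1) * (1 + τ) ^ (a - 1) =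
      beta a b * (1 + x) ^ (a + b - 1) := by
  have hx' : 0 < 1 + x := by linarith
  have hsubst := integral_comp_mul_add (a := 0) (b := 1)
    (fun τ => (x - τ) ^ (b - 1) * (1 + τ) ^ (a - 1)) hx'.ne' (-1)
  rw [mul_zero, zero_add, mul_one, add_neg_cancel_comm, smul_eq_mul,
    eq_inv_mul_iff_mul_eq₀ hx'.ne'] at hsubst
  rw [← hsubst, ← integral_rpow_mul_one_sub_rpow_s18 ha hb, ← intervalIntegral.integral_const_mul,
    ← intervalIntegral.integral_mul_const]
  refine integral_congr fun s hs => ?_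
  rw [Set.uIcc_of_le zero_le_one] at hs
  rw [show x - ((1 + x) * s + -1) = (1 + x) * (1 - s) by ring,
    show 1 + ((1 + x) * s + -1) = (1 + x) * s by ring,
    mul_rpow hx'.le (sub_nonneg.2 hs.2), mul_rpow hx'.le hs.1,
    show a + b - 1 = 1 + (b - 1) + (a - 1) by ring, rpow_add hx', rpow_add hx', rpow_one]
  ring

noncomputable def gegenbauerTerm (μ : ℝ) (m k : ℕ) (x : ℝ) : ℝ :=
  if 2 * k ≤ m then
    (-1) ^ k * Gamma ((m : ℝ) - k + μ) / (Gamma μ * k ! * (m - 2 * k)!) * (2 * x) ^ (m - 2 * k)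
  else 0

theorem gegenbauerTerm_of_lt {μ : ℝ} {m k : ℕ} (h : m < 2 * k) (x : ℝ) :
    gegenbauerTerm μ m k x = 0 :=
  if_neg h.not_ge

theorem gegenbauer_eq_sum_gegenbauerTerm (μ : ℝ) {m A : ℕ} (hA : m / 2 < A) (x : ℝ) :
    Gegenbauer μ m x = ∑ k ∈ range A, gegenbauerTerm μ m k x := by
  rw [Gegenbauer, ← sum_subset (range_subset_range.2 hA)
    fun k _ hk => gegenbauerTerm_of_lt (by simp at hk; omega) x]
  refine sum_congr rfl fun k hk => ?_
  rw [gegenbauerTerm, if_pos (by simp at hk; omega)]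

theorem gegenbauerTerm_recurrence_zero {μ : ℝ} (hμ : 0 < μ) (m : ℕ) (x : ℝ) :
    (m + 2) * gegenbauerTerm μ (m + 2) 0 x =
      2 * (m + 1 + μ) * x * gegenbauerTerm μ (m + 1) 0 x := by
  simp only [gegenbauerTerm, if_pos (Nat.zero_le _), Nat.sub_zero, mul_zero]
  push_cast [Nat.factorial_succ]
  rw [show (m : ℝ) + 2 - 0 + μ = (m + 1 + μ) + 1 by ring, Gamma_add_one (by positivity),
    show (m : ℝ) + 1 - 0 + μ = m + 1 + μ by ring, pow_succ]
  have hΓ : Gamma μ ≠ 0 := (Gamma_pos_of_pos hμ).ne'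
  field_simp
  ring

theorem gegenbauerTerm_recurrence_succ {μ : ℝ} (hμ : 0 < μ) (m k : ℕ) (x : ℝ) :
    (m + 2) * gegenbauerTerm μ (m + 2) (k + 1) x =
      2 * (m + 1 + μ) * x * gegenbauerTerm μ (m + 1) (k + 1) x -
        (m + 2 * μ) * gegenbauerTerm μ m k x := by
  have hfac (j : ℕ) : ((j + 1)! : ℝ) = (j + 1) * j ! := by push_cast [Nat.factorial_succ]; ring
  have hΓ : Gamma μ ≠ 0 := (Gamma_pos_of_pos hμ).ne'
  rcases lt_trichotomy m (2 * k) with h | rfl | h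
  · rw [gegenbauerTerm_of_lt (by omega), gegenbauerTerm_of_lt (by omega),
      gegenbauerTerm_of_lt h]
    ring
  · rw [gegenbauerTerm_of_lt (m := 2 * k + 1) (k := k + 1) (by omega)]
    simp only [gegenbauerTerm, if_pos le_rfl, if_pos (show 2 * (k + 1) ≤ 2 * k + 2 by omega),
      show 2 * k + 2 - 2 * (k + 1) = 0 by omega, Nat.sub_self]
    push_cast
    rw [show 2 * (k : ℝ) + 2 - (k + 1) + μ = (k + μ) + 1 by ring, Gamma_add_one (by positivity),
      show 2 * (k : ℝ) - k + μ = k + μ by ring, hfac, pow_succ]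
    field_simp
    ring
  · obtain ⟨a, rfl⟩ := Nat.exists_eq_add_of_lt h
    simp only [gegenbauerTerm, if_pos (show 2 * (k + 1) ≤ 2 * k + a + 1 + 2 by omega),
      if_pos (show 2 * (k + 1) ≤ 2 * k + a + 1 + 1 by omega),
      if_pos (show 2 * k ≤ 2 * k + a + 1 by omega),
      show 2 * k + a + 1 + 2 - 2 * (k + 1) = a + 1 by omega,
      show 2 * k + a + 1 + 1 - 2 * (k + 1) = a by omega,
      show 2 * k + a + 1 - 2 * k = a + 1 by omega]
    push_cast
    rw [show 2 * (k : ℝ) + a + 1 + 2 - (k + 1) + μ = (k + a + 1 + μ) + 1 by ring,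
      Gamma_add_one (by positivity),
      show 2 * (k : ℝ) + a + 1 + 1 - (k + 1) + μ = k + a + 1 + μ by ring,
      show 2 * (k : ℝ) + a + 1 - k + μ = k + a + 1 + μ by ring, hfac, hfac, pow_succ, pow_succ]
    field_simp
    ring

theorem gegenbauerTerm_recurrence {μ : ℝ} (hμ : 0 < μ) (m k : ℕ) (x : ℝ) :
    (m + 2) * gegenbauerTerm μ (m + 2) k x =
      2 * (m + 1 + μ) * x * gegenbauerTerm μ (m + 1) k x -
        (m + 2 * μ) * (if k = 0 then 0 else gegenbauerTerm μ m (k - 1) x) := by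
  rcases k with _ | k
  · rw [if_pos rfl, mul_zero, sub_zero, gegenbauerTerm_recurrence_zero hμ]
  · rw [if_neg k.succ_ne_zero, Nat.add_sub_cancel, gegenbauerTerm_recurrence_succ hμ]

theorem gegenbauer_recurrence {μ : ℝ} (hμ : 0 < μ) (m : ℕ) (x : ℝ) :
    (m + 2) * Gegenbauer μ (m + 2) x =
      2 * (m + 1 + μ) * x * Gegenbauer μ (m + 1) x - (m + 2 * μ) * Gegenbauer μ m x := by
  have hshift : ∑ k ∈ range (m + 2), (if k = 0 then 0 else gegenbauerTerm μ m (k - 1) x) =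
      Gegenbauer μ m x := by
    rw [sum_range_succ', gegenbauer_eq_sum_gegenbauerTerm μ (A := m + 1) (by omega)]
    simp
  rw [gegenbauer_eq_sum_gegenbauerTerm μ (A := m + 2) (by omega),
    gegenbauer_eq_sum_gegenbauerTerm μ (m := m + 1) (A := m + 2) (by omega), ← hshift,
    mul_sum, mul_sum, mul_sum, ← sum_sub_distrib]
  exact sum_congr rfl fun k _ => gegenbauerTerm_recurrence hμ m k x

theorem gegenbauer_one {μ : ℝ} (hμ : 0 < μ) (m : ℕ) :
    Gegenbauer μ m 1 = Gamma (2 * μ + m) / (Gamma (2 * μ) * m !) := by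
  have hΓ : Gamma μ ≠ 0 := (Gamma_pos_of_pos hμ).ne'
  have hΓ2 : Gamma (2 * μ) ≠ 0 := (Gamma_pos_of_pos (by positivity)).ne'
  induction m using Nat.twoStepInduction with
  | zero => simp [Gegenbauer, hΓ, hΓ2]
  | one =>
    simp [Gegenbauer, add_comm (1 : ℝ), Gamma_add_one hμ.ne',
      Gamma_add_one (by positivity : 2 * μ ≠ 0)]
    field_simp
  | more m ih₀ ih₁ =>
    have hrec := gegenbauer_recurrence hμ m 1
    rw [ih₀, ih₁] at hrec
    have hm : (m : ℝ) + 2 ≠ 0 := by positivity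
    rw [← mul_right_inj' hm, hrec]
    push_cast [Nat.factorial_succ]
    rw [show 2 * μ + (m + 2) = (2 * μ + m + 1) + 1 by ring, Gamma_add_one (by positivity),
      show 2 * μ + (m + 1) = (2 * μ + m) + 1 by ring, Gamma_add_one (by positivity)]
    field_simp
    ring

theorem gegenbauerTerm_eq_sum_one_add_pow {lam : ℝ} (hlam : 0 < lam) (n k : ℕ) (x : ℝ) :
    gegenbauerTerm lam n k x = ∑ j ∈ range (n + 1),
      (-1) ^ (n - j) * 2 ^ j * Gamma (lam + j) / (Gamma lam * j !) *
        gegenbauerTerm (lam + j) (n - j) k 1 * (1 + x) ^ j := by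
  by_cases hk : n < 2 * k
  · rw [gegenbauerTerm_of_lt hk]
    exact (sum_eq_zero fun j _ => by rw [gegenbauerTerm_of_lt (by omega)]; ring).symm
  obtain ⟨p, rfl⟩ := Nat.exists_eq_add_of_le (not_lt.1 hk)
  rw [← sum_subset (range_subset_range.2 (show p + 1 ≤ 2 * k + p + 1 by omega))
    fun j hj hj' => by simp only [mem_range] at hj hj'; rw [gegenbauerTerm_of_lt (by omega)]; ring]
  rw [gegenbauerTerm, if_pos (by omega), Nat.add_sub_cancel_left,
    show 2 * x = 2 * (1 + x) + -2 by ring, add_pow, mul_sum]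
  refine sum_congr rfl fun j hj => ?_
  obtain ⟨q, rfl⟩ := Nat.exists_eq_add_of_le (Nat.lt_succ_iff.1 (mem_range.1 hj))
  have hfac : ((j + q).choose j : ℝ) * j ! * q ! = (j + q)! := by
    have := Nat.choose_mul_factorial_mul_factorial (Nat.le_add_right j q)
    rw [Nat.add_sub_cancel_left] at this
    exact_mod_cast this
  have hchoose : ((j + q).choose j : ℝ) ≠ 0 := by
    exact_mod_cast (Nat.choose_pos (Nat.le_add_right j q)).ne'
  have hΓ : Gamma (lam + j) ≠ 0 := (Gamma_pos_of_pos (by positivity)).ne'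
  simp only [gegenbauerTerm, if_pos (show 2 * k ≤ q + 2 * k by omega),
    show 2 * k + (j + q) - j = q + 2 * k by omega, Nat.add_sub_cancel_left, Nat.add_sub_cancel,
    mul_pow (2 : ℝ) (1 + x)]
  push_cast
  rw [← hfac, show (-2 : ℝ) ^ q = (-1) ^ q * 2 ^ q by rw [← mul_pow]; norm_num, pow_add, pow_mul,
    neg_one_sq, one_pow, show 2 * (k : ℝ) + (j + q) - k + lam = lam + j + (q + k) by ring,
    show (q : ℝ) + 2 * k - k + (lam + j) = lam + j + (q + k) by ring]
  field_simp

/-- The coefficient of `(1 + x) ^ j` in `C_n^λ(x)`: `(-1)^(n-j) 2^j Γ(λ + j) / (Γ(λ) j!)` times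
`C_{n-j}^{λ+j}(1)`, the latter written out by `gegenbauer_one`. -/
noncomputable def gegenbauerShiftCoeff (lam : ℝ) (n j : ℕ) : ℝ :=
  (-1) ^ (n - j) * 2 ^ j * Gamma (lam + j) * Gamma (2 * lam + j + n) /
    (Gamma lam * j ! * Gamma (2 * lam + 2 * j) * (n - j)!)

theorem gegenbauer_eq_sum_gegenbauerShiftCoeff {lam : ℝ} (hlam : 0 < lam) (n : ℕ) (x : ℝ) :
    Gegenbauer lam n x = ∑ j ∈ range (n + 1), gegenbauerShiftCoeff lam n j * (1 + x) ^ j := by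
  rw [gegenbauer_eq_sum_gegenbauerTerm lam (Nat.lt_succ_self (n / 2))]
  simp_rw [gegenbauerTerm_eq_sum_one_add_pow hlam n _ x]
  rw [sum_comm]
  refine sum_congr rfl fun j hj => ?_
  rw [← sum_mul, ← mul_sum, ← gegenbauer_eq_sum_gegenbauerTerm _ (by omega),
    gegenbauer_one (by positivity), gegenbauerShiftCoeff,
    Nat.cast_sub (Nat.lt_succ_iff.1 (mem_range.1 hj))]
  rw [show 2 * (lam + j) + (n - j : ℝ) = 2 * lam + j + n by ring, mul_add 2 lam]
  ring

theorem gegenbauer_neg (lam : ℝ) (n : ℕ) (x : ℝ) :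
    Gegenbauer lam n (-x) = (-1) ^ n * Gegenbauer lam n x := by
  rw [Gegenbauer, Gegenbauer, mul_sum]
  refine sum_congr rfl fun k hk => ?_
  obtain ⟨p, rfl⟩ := Nat.exists_eq_add_of_le (show 2 * k ≤ n by simp at hk; omega)
  rw [Nat.add_sub_cancel_left, mul_neg, neg_pow (2 * x), pow_add (-1 : ℝ), pow_mul, neg_one_sq,
    one_pow]
  ring

theorem Dplus_integral_one_add_pow {lam y : ℝ} (hlam : -(1 / 2) < lam) (hy : -1 < y)
    (j : ℕ) :
    ∫ τ in (-1 : ℝ)..y, (y - τ) ^ (-(1 / 2) : ℝ) * (1 + τ) ^ (lam - 1 / 2) * (1 + τ) ^ j =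
      beta (lam + j + 1 / 2) (1 / 2) * (1 + y) ^ (lam + j) := by
  have hbeta := integral_sub_rpow_mul_one_add_rpow (a := lam + j + 1 / 2)
    (by linarith [(Nat.cast_nonneg j : (0 : ℝ) ≤ j)]) one_half_pos hy
  rw [show lam + j + 1 / 2 + 1 / 2 - 1 = lam + j by ring] at hbeta
  rw [← hbeta]
  refine integral_congr_ae (Eventually.of_forall fun τ hτ => ?_)
  rw [Set.uIoc_of_le hy.le] at hτ
  rw [show (1 / 2 : ℝ) - 1 = -(1 / 2) by norm_num,
    show lam + j + 1 / 2 - 1 = lam - 1 / 2 + j by ring,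
    rpow_add_natCast (by linarith [hτ.1])]
  ring

theorem Dplus_sum_one_add_pow {lam : ℝ} (hlam : -(1 / 2) < lam) (N : ℕ) (a : ℕ → ℝ) {x : ℝ}
    (hx : -1 ≤ x) :
    Dplus lam (fun τ => ∑ j ∈ range N, a j * (1 + τ) ^ j) x =
      ∑ j ∈ range N, j * a j * beta (lam + j + 1 / 2) (1 / 2) * (1 + x) ^ j := by
  rcases hx.eq_or_lt with rfl | hx
  · simp only [Dplus, add_neg_cancel, zero_mul]
    exact (sum_eq_zero fun j _ => by rcases j with _ | j <;> simp).symm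
  set c : ℕ → ℝ := fun j => a j * beta (lam + j + 1 / 2) (1 / 2)
  have hinner : (fun y => (1 + y) ^ (-lam) * ∫ τ in (-1 : ℝ)..y,
      (y - τ) ^ (-(1 / 2) : ℝ) * (1 + τ) ^ (lam - 1 / 2) * ∑ j ∈ range N, a j * (1 + τ) ^ j)
      =ᶠ[𝓝 x] fun y => ∑ j ∈ range N, c j * (1 + y) ^ j := by
    filter_upwards [Ioi_mem_nhds hx] with y (hy : -1 < y)
    have hint (j : ℕ) : IntervalIntegrable
        (fun τ => (y - τ) ^ (-(1 / 2) : ℝ) * (1 + τ) ^ (lam - 1 / 2) * (1 + τ) ^ j) volume (-1) y :=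
      intervalIntegrable_of_integral_ne_zero <| by
        rw [Dplus_integral_one_add_pow hlam hy]
        have hj : 0 < lam + j + 1 / 2 := by linarith [(Nat.cast_nonneg j : (0 : ℝ) ≤ j)]
        exact (mul_pos (beta_pos hj one_half_pos) (rpow_pos_of_pos (by linarith) _)).ne'
    simp_rw [mul_sum, mul_left_comm _ (a _)]
    rw [integral_finsetSum fun j _ => (hint j).const_mul (a j), mul_sum]
    refine sum_congr rfl fun j _ => ?_
    rw [intervalIntegral.integral_const_mul, Dplus_integral_one_add_pow hlam hy, ← rpow_natCast,
      rpow_add (by linarith)]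
    have hpow : (1 + y) ^ (-lam) * (1 + y) ^ lam = 1 := by
      rw [← rpow_add (by linarith), neg_add_cancel, rpow_zero]
    linear_combination c j * (1 + y) ^ (j : ℝ) * hpow
  have hderiv : HasDerivAt (fun y => ∑ j ∈ range N, c j * (1 + y) ^ j)
      (∑ j ∈ range N, c j * (j * (1 + x) ^ (j - 1) * 1)) x :=
    HasDerivAt.fun_sum fun j _ => (((hasDerivAt_id' x).const_add 1).pow j).const_mul (c j)
  rw [Dplus, hinner.deriv_eq, hderiv.deriv, mul_sum]
  refine sum_congr rfl fun j _ => ?_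
  rcases j with _ | j
  · simp
  · rw [Nat.add_sub_cancel, pow_succ]
    ring

theorem Dplus_const_mul (lam c : ℝ) (f : ℝ → ℝ) (x : ℝ) :
    Dplus lam (fun t => c * f t) x = c * Dplus lam f x := by
  simp only [Dplus, mul_left_comm _ c, intervalIntegral.integral_const_mul]
  rw [deriv_const_mul_field']
  ring

theorem Dminus_eq_neg_Dplus_comp_neg (lam : ℝ) (f : ℝ → ℝ) (x : ℝ) :
    Dminus lam f x = -Dplus lam (fun t => f (-t)) (-x) := by
  rw [Dminus, Dplus]
  set g : ℝ → ℝ := fun z => (1 + z) ^ (-lam) *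
    ∫ τ in (-1)..z, (z - τ) ^ (-(1 / 2) : ℝ) * (1 + τ) ^ (lam - 1 / 2) * f (-τ)
  have hreflect : (fun y => (1 - y) ^ (-lam) *
      ∫ τ in y..1, (τ - y) ^ (-(1 / 2) : ℝ) * (1 - τ) ^ (lam - 1 / 2) * f τ) = fun y => g (-y) := by
    funext y
    have hsubst := integral_comp_neg (a := -1) (b := -y)
      fun τ => (τ - y) ^ (-(1 / 2) : ℝ) * (1 - τ) ^ (lam - 1 / 2) * f τ
    simp only [neg_neg, neg_sub_comm, sub_neg_eq_add] at hsubst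
    rw [← hsubst, sub_eq_add_neg (1 : ℝ) y]
  rw [hreflect, deriv_comp_neg]
  ring

theorem gegenbauerShiftCoeff_mul_beta {lam : ℝ} (hlam : 0 < lam) {n j : ℕ} (hj : j ≤ n) :
    j * gegenbauerShiftCoeff lam (n + 1) j * beta (lam + j + 1 / 2) (1 / 2) =
      √π * Gamma (lam + 1 / 2) / Gamma lam / (n + 1 + lam) *
        ((n + 1 + 2 * lam) * gegenbauerShiftCoeff (lam + 1 / 2) n j +
          (n + 1) * gegenbauerShiftCoeff (lam + 1 / 2) (n + 1) j) := by
  obtain ⟨p, rfl⟩ := Nat.exists_eq_add_of_le hj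
  simp only [gegenbauerShiftCoeff, beta, show j + p + 1 - j = p + 1 by omega,
    Nat.add_sub_cancel_left, Gamma_one_half_eq]
  push_cast
  rw [show lam + j + 1 / 2 + 1 / 2 = (lam + j) + 1 by ring, Gamma_add_one (by positivity),
    show 2 * (lam + 1 / 2) + 2 * j = (2 * lam + 2 * j) + 1 by ring, Gamma_add_one (by positivity),
    show 2 * (lam + 1 / 2) + j + (j + p + 1) = (2 * lam + j + (j + p + 1)) + 1 by ring,
    Gamma_add_one (by positivity),
    show 2 * (lam + 1 / 2) + j + (j + p) = 2 * lam + j + (j + p + 1) by ring,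
    show lam + 1 / 2 + j = lam + j + 1 / 2 by ring, Nat.factorial_succ p]
  have h1 : Gamma lam ≠ 0 := (Gamma_pos_of_pos hlam).ne'
  have h2 : Gamma (lam + 1 / 2) ≠ 0 := (Gamma_pos_of_pos (by positivity)).ne'
  have h3 : Gamma (lam + j) ≠ 0 := (Gamma_pos_of_pos (by positivity)).ne'
  have h4 : Gamma (lam + j + 1 / 2) ≠ 0 := (Gamma_pos_of_pos (by positivity)).ne'
  have h5 : Gamma (2 * lam + 2 * j) ≠ 0 := (Gamma_pos_of_pos (by positivity)).ne'
  push_cast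
  field_simp
  ring

/-- Separate from `gegenbauerShiftCoeff_mul_beta` because truncated subtraction makes
`gegenbauerShiftCoeff (lam + 1 / 2) n (n + 1)` nonzero. -/
theorem gegenbauerShiftCoeff_self_mul_beta {lam : ℝ} (hlam : 0 < lam) (n : ℕ) :
    (n + 1) * gegenbauerShiftCoeff lam (n + 1) (n + 1) * beta (lam + (n + 1) + 1 / 2) (1 / 2) =
      √π * Gamma (lam + 1 / 2) / Gamma lam / (n + 1 + lam) *
        ((n + 1) * gegenbauerShiftCoeff (lam + 1 / 2) (n + 1) (n + 1)) := by
  simp only [gegenbauerShiftCoeff, beta, Nat.sub_self, Gamma_one_half_eq]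
  push_cast
  rw [show lam + (n + 1) + 1 / 2 + 1 / 2 = (lam + (n + 1)) + 1 by ring,
    Gamma_add_one (by positivity),
    show 2 * (lam + 1 / 2) + (n + 1) + (n + 1) = (2 * lam + (n + 1) + (n + 1)) + 1 by ring,
    Gamma_add_one (by positivity),
    show 2 * (lam + 1 / 2) + 2 * (n + 1) = (2 * lam + (n + 1) + (n + 1)) + 1 by ring,
    Gamma_add_one (by positivity),
    show 2 * lam + 2 * ((n : ℝ) + 1) = 2 * lam + (n + 1) + (n + 1) by ring,
    show lam + 1 / 2 + (n + 1) = lam + (n + 1) + 1 / 2 by ring]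
  have h1 : Gamma lam ≠ 0 := (Gamma_pos_of_pos hlam).ne'
  have h2 : Gamma (lam + 1 / 2) ≠ 0 := (Gamma_pos_of_pos (by positivity)).ne'
  have h3 : Gamma (lam + (n + 1)) ≠ 0 := (Gamma_pos_of_pos (by positivity)).ne'
  have h4 : Gamma (lam + (n + 1) + 1 / 2) ≠ 0 := (Gamma_pos_of_pos (by positivity)).ne'
  have h5 : Gamma (2 * lam + (n + 1) + (n + 1)) ≠ 0 := (Gamma_pos_of_pos (by positivity)).ne'
  field_simp
  ring

theorem Dplus_gegenbauer_eq_sum {lam : ℝ} (hlam : 0 < lam) (n : ℕ) {x : ℝ} (hx : -1 ≤ x) :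
    Dplus lam (Gegenbauer lam n) x = ∑ j ∈ range (n + 1),
      j * gegenbauerShiftCoeff lam n j * beta (lam + j + 1 / 2) (1 / 2) * (1 + x) ^ j := by
  rw [show Gegenbauer lam n = _ from funext (gegenbauer_eq_sum_gegenbauerShiftCoeff hlam n)]
  exact Dplus_sum_one_add_pow (by linarith) _ _ hx

theorem Dplus_gegenbauer_zero {lam : ℝ} (hlam : 0 < lam) {x : ℝ} (hx : -1 ≤ x) :
    Dplus lam (Gegenbauer lam 0) x = 0 := by
  simp [Dplus_gegenbauer_eq_sum hlam 0 hx]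

theorem Dplus_gegenbauer_succ {lam : ℝ} (hlam : 0 < lam) (n : ℕ) {x : ℝ} (hx : -1 ≤ x) :
    Dplus lam (Gegenbauer lam (n + 1)) x =
      √π * Gamma (lam + 1 / 2) / Gamma lam / (n + 1 + lam) *
        ((n + 1 + 2 * lam) * Gegenbauer (lam + 1 / 2) n x +
          (n + 1) * Gegenbauer (lam + 1 / 2) (n + 1) x) := by
  have hlow : ∀ j ∈ range (n + 1),
      j * gegenbauerShiftCoeff lam (n + 1) j * beta (lam + j + 1 / 2) (1 / 2) * (1 + x) ^ j =
        √π * Gamma (lam + 1 / 2) / Gamma lam / (n + 1 + lam) *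
          ((n + 1 + 2 * lam) * (gegenbauerShiftCoeff (lam + 1 / 2) n j * (1 + x) ^ j) +
            (n + 1) * (gegenbauerShiftCoeff (lam + 1 / 2) (n + 1) j * (1 + x) ^ j)) :=
    fun j hj => by
      rw [gegenbauerShiftCoeff_mul_beta hlam (Nat.lt_succ_iff.1 (mem_range.1 hj))]
      ring
  rw [Dplus_gegenbauer_eq_sum hlam _ hx, gegenbauer_eq_sum_gegenbauerShiftCoeff (by positivity),
    gegenbauer_eq_sum_gegenbauerShiftCoeff (by positivity), sum_range_succ,
    sum_range_succ _ (n + 1),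
    sum_congr rfl hlow, ← mul_sum, sum_add_distrib, ← mul_sum, ← mul_sum]
  push_cast
  rw [gegenbauerShiftCoeff_self_mul_beta hlam n]
  ring

theorem Dminus_gegenbauer (lam : ℝ) (n : ℕ) (x : ℝ) :
    Dminus lam (Gegenbauer lam n) x = -(-1) ^ n * Dplus lam (Gegenbauer lam n) (-x) := by
  simp only [Dminus_eq_neg_Dplus_comp_neg, gegenbauer_neg, Dplus_const_mul]
  ring

theorem Dminus_gegenbauer_succ {lam : ℝ} (hlam : 0 < lam) (n : ℕ) {x : ℝ} (hx : x ≤ 1) :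
    Dminus lam (Gegenbauer lam (n + 1)) x =
      √π * Gamma (lam + 1 / 2) / Gamma lam / (n + 1 + lam) *
        ((n + 1 + 2 * lam) * Gegenbauer (lam + 1 / 2) n x -
          (n + 1) * Gegenbauer (lam + 1 / 2) (n + 1) x) := by
  rw [Dminus_gegenbauer, Dplus_gegenbauer_succ hlam n (by linarith), gegenbauer_neg,
    gegenbauer_neg, pow_succ]
  rcases neg_one_pow_eq_or ℝ n with h | h <;> rw [h] <;> ring

/-- `𝓓^λ_+ C_n^λ = const · C_{n−1}^{λ+1/2}` (with `C_{−1}^{λ+1/2} = 0`) and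
`𝓓^λ_− C_n^λ = const · C_n^{λ+1/2}`. -/
theorem stmt18 (lam : ℝ) (hlam : 0 < lam) (n : ℕ) (x : ℝ) (hx : x ∈ Set.Icc (-1 : ℝ) 1) :
    calDplus lam (Gegenbauer lam n) x =
      (Real.sqrt Real.pi * Real.Gamma (lam + 1 / 2) / Real.Gamma lam) *
        (2 * ((n : ℝ) + 2 * lam) / ((n : ℝ) + lam)) *
        (if n = 0 then 0 else Gegenbauer (lam + 1 / 2) (n - 1) x) ∧
    calDminus lam (Gegenbauer lam n) x =
      (Real.sqrt Real.pi * Real.Gamma (lam + 1 / 2) / Real.Gamma lam) *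
        (2 * (n : ℝ) / ((n : ℝ) + lam)) * Gegenbauer (lam + 1 / 2) n x := by
  rcases n with _ | n
  · have hx' : -1 ≤ -x := by linarith [hx.2]
    simp [calDplus, calDminus, Dminus_gegenbauer, Dplus_gegenbauer_zero hlam hx.1,
      Dplus_gegenbauer_zero hlam hx']
  · rw [calDplus, calDminus, Dplus_gegenbauer_succ hlam n hx.1, Dminus_gegenbauer_succ hlam n hx.2,
      if_neg n.succ_ne_zero, Nat.add_sub_cancel]
    push_cast
    constructor <;> ring
end
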